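/- Let V be a complete discrete valuation ring with uniformiser π, let M and N be V-modules, and let S ⊆ M and T ⊆ N be V-submodules that are compactoid in M and in N, respectively. Then the image of S ⊗_V T in M ⊗_V N is a compactoid V-submodule of M ⊗_V N, i.e., its image in (M ⊗_V N)/π^n(M ⊗_V N) is a finitely generated V-module for every n ∈ ℕ. (One direction of Proposition 4.5 on the compatibility of the compactoid bornology with completed tensor products.) -/

import Mathlib

open Pointwise TensorProduct

/-- `S` is a compactoid submodule of `M`: for every `n`, the image of `S` in
`M/πⁿM` is finitely generated, i.e. there is a finite `Fₙ ⊆ M` with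
`S ⊆ V·Fₙ + πⁿ M`. -/
def CompactoidIn {V : Type*} [CommRing V] (π : V) {M : Type*} [AddCommGroup M]
    [Module V M] (S : Submodule V M) : Prop :=
  ∀ n : ℕ, ∃ F : Finset M,
    S ≤ Submodule.span V (F : Set M) ⊔ π ^ n • (⊤ : Submodule V M)

/-!
By bilinearity, `(span F + πⁿM) ⊗ (span G + πⁿN) ⊆ span (F ⊗ G) + πⁿ(M ⊗ N)`, so finite sets
witnessing compactoidness of `S` and `T` at level `n` give the finite set of tensors `f ⊗ g`
witnessing it for the image of `S ⊗ T`; the same works for any bilinear map in place of `⊗`.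
-/

namespace Submodule

variable {R M N P : Type*} [CommSemiring R] [AddCommMonoid M] [Module R M] [AddCommMonoid N]
  [Module R N] [AddCommMonoid P] [Module R P]

theorem map₂_smul_top_left_le (f : M →ₗ[R] N →ₗ[R] P) (r : R) (q : Submodule R N) :
    map₂ f (r • ⊤) q ≤ r • ⊤ := by
  refine map₂_le.mpr fun _ hm n _ => ?_
  obtain ⟨m, -, rfl⟩ := (mem_smul_pointwise_iff_exists _ _ _).mp hm
  rw [map_smul, LinearMap.smul_apply]
  exact smul_mem_pointwise_smul _ _ _ mem_top

theorem map₂_smul_top_right_le (f : M →ₗ[R] N →ₗ[R] P) (r : R) (p : Submodule R M) :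
    map₂ f p (r • ⊤) ≤ r • ⊤ := by
  refine map₂_le.mpr fun m _ _ hn => ?_
  obtain ⟨n, -, rfl⟩ := (mem_smul_pointwise_iff_exists _ _ _).mp hn
  rw [map_smul]
  exact smul_mem_pointwise_smul _ _ _ mem_top

theorem map₂_sup_smul_top_le (f : M →ₗ[R] N →ₗ[R] P) (r : R) (p : Submodule R M)
    (q : Submodule R N) : map₂ f (p ⊔ r • ⊤) (q ⊔ r • ⊤) ≤ map₂ f p q ⊔ r • ⊤ := by
  rw [map₂_sup_left, map₂_sup_right, map₂_sup_right]
  exact sup_le (sup_le le_sup_left (le_sup_of_le_right (map₂_smul_top_right_le f r p)))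
    (le_sup_of_le_right (sup_le (map₂_smul_top_left_le f r q) (map₂_smul_top_left_le f r _)))

end Submodule

theorem CompactoidIn.map₂ {V M N P : Type*} [CommRing V] {π : V} [AddCommGroup M] [Module V M]
    [AddCommGroup N] [Module V N] [AddCommGroup P] [Module V P] (f : M →ₗ[V] N →ₗ[V] P)
    {S : Submodule V M} {T : Submodule V N} (hS : CompactoidIn π S) (hT : CompactoidIn π T) :
    CompactoidIn π (Submodule.map₂ f S T) := by
  intro n
  obtain ⟨F, hF⟩ := hS n
  obtain ⟨G, hG⟩ := hT n
  classical
  refine ⟨Finset.image₂ (fun m n => f m n) F G, ?_⟩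
  calc Submodule.map₂ f S T
      ≤ Submodule.map₂ f (Submodule.span V F ⊔ π ^ n • ⊤) (Submodule.span V G ⊔ π ^ n • ⊤) :=
        Submodule.map₂_le_map₂ hF hG
    _ ≤ Submodule.map₂ f (Submodule.span V F) (Submodule.span V G) ⊔ π ^ n • ⊤ :=
        Submodule.map₂_sup_smul_top_le f _ _ _
    _ = _ := by rw [Submodule.map₂_span_span, Finset.coe_image₂]

theorem compactoidIn_tensor_general
    {V : Type*} [CommRing V]
    (π : V)
    {M N : Type*} [AddCommGroup M] [Module V M] [AddCommGroup N] [Module V N]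
    (S : Submodule V M) (T : Submodule V N)
    (hS : CompactoidIn π S) (hT : CompactoidIn π T) :
    CompactoidIn π (LinearMap.range (TensorProduct.mapIncl S T)) := by
  rw [TensorProduct.range_mapIncl]
  exact hS.map₂ _ hT

/-- One direction of Proposition 4.5: if `S ⊆ M` and `T ⊆ N` are compactoid
submodules, then the image of `S ⊗ T` in `M ⊗ N` is a compactoid submodule of
`M ⊗ N`. -/
theorem compactoidIn_tensor
    {V : Type*} [CommRing V] [IsDomain V] [IsDiscreteValuationRing V]
    (π : V) (hπ : Irreducible π) [IsAdicComplete (Ideal.span {π}) V]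
    {M N : Type*} [AddCommGroup M] [Module V M] [AddCommGroup N] [Module V N]
    (S : Submodule V M) (T : Submodule V N)
    (hS : CompactoidIn π S) (hT : CompactoidIn π T) :
    CompactoidIn π (LinearMap.range (TensorProduct.mapIncl S T)) :=
  compactoidIn_tensor_general π S T hS hT
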